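/- The outputs of the two hexagon relations differ by a transposition of one pair of arrows (Appendix A remark): Let (C,x) be a quiver pair with m nodes and let i, j, k be pairwise distinct nodes. Let A be the result of applying to (C,x) the unlinkings U(i,j), then U(j,k), then U(m+1,k), and let B be the result of applying U(i,j), then U(m+1,k), then U(j,k) (both with m+3 nodes; the node created at step t has index m+t). Let τ be the transposition of {1,…,m+3} exchanging m+2 and m+3. Then A's variable at a equals B's variable at τ(a) for all a, and A's matrix at (a,b) equals B's matrix at (τ(a),τ(b)) for all unordered pairs {a,b} except {m+1,m+2} and {j,m+3}; precisely, A(m+1,m+2) = B(m+1,m+3) + 1 and A(j,m+3) = B(j,m+2) − 1 (together with the symmetric entries). -/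
import Mathlib


namespace QuiverUnlink

/-- Unlinking of the distinct nodes `i` and `j`: the matrix part.
Nodes are indexed `0, …, m-1`; the newly created node has index `m`. -/
def unlinkC {m : ℕ} (C : Fin m → Fin m → ℤ) (i j : Fin m) :
    Fin (m + 1) → Fin (m + 1) → ℤ := fun a b =>
  if ha : (a : ℕ) < m then
    if hb : (b : ℕ) < m then
      if ((⟨a, ha⟩ : Fin m) = i ∧ (⟨b, hb⟩ : Fin m) = j) ∨
         ((⟨a, ha⟩ : Fin m) = j ∧ (⟨b, hb⟩ : Fin m) = i) then
        C i j - 1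
      else C ⟨a, ha⟩ ⟨b, hb⟩
    else
      if (⟨a, ha⟩ : Fin m) = i then C i i + C i j - 1
      else if (⟨a, ha⟩ : Fin m) = j then C j j + C i j - 1
      else C ⟨a, ha⟩ i + C ⟨a, ha⟩ j
  else
    if hb : (b : ℕ) < m then
      if (⟨b, hb⟩ : Fin m) = i then C i i + C i j - 1
      else if (⟨b, hb⟩ : Fin m) = j then C j j + C i j - 1
      else C ⟨b, hb⟩ i + C ⟨b, hb⟩ j
    else C i i + C j j + 2 * C i j - 1

/-- Unlinking of the distinct nodes `i` and `j`: the generating-parameters part. -/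
def unlinkX {G : Type*} [CommGroup G] {m : ℕ} (q : G) (x : Fin m → G) (i j : Fin m) :
    Fin (m + 1) → G := fun a =>
  if ha : (a : ℕ) < m then x ⟨a, ha⟩ else q⁻¹ * x i * x j

section Helpers
variable {m : ℕ} {G : Type*} [CommGroup G]

lemma unlinkC_cc (C : Fin m → Fin m → ℤ) (i j a b : Fin m) :
    unlinkC C i j a.castSucc b.castSucc =
      if (a = i ∧ b = j) ∨ (a = j ∧ b = i) then C i j - 1 else C a b := by
  simp [unlinkC, Fin.is_lt]

lemma unlinkC_cl (C : Fin m → Fin m → ℤ) (i j a : Fin m) :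
    unlinkC C i j a.castSucc (Fin.last m) =
      if a = i then C i i + C i j - 1 else if a = j then C j j + C i j - 1
      else C a i + C a j := by
  simp [unlinkC, Fin.is_lt]

lemma unlinkC_lc (C : Fin m → Fin m → ℤ) (i j b : Fin m) :
    unlinkC C i j (Fin.last m) b.castSucc =
      if b = i then C i i + C i j - 1 else if b = j then C j j + C i j - 1
      else C b i + C b j := by
  simp [unlinkC, Fin.is_lt]

lemma unlinkC_ll (C : Fin m → Fin m → ℤ) (i j : Fin m) :
    unlinkC C i j (Fin.last m) (Fin.last m) = C i i + C j j + 2 * C i j - 1 := by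
  simp [unlinkC]

lemma unlinkX_c (q : G) (x : Fin m → G) (i j a : Fin m) :
    unlinkX q x i j a.castSucc = x a := by
  simp [unlinkX, Fin.is_lt]

lemma unlinkX_l (q : G) (x : Fin m → G) (i j : Fin m) :
    unlinkX q x i j (Fin.last m) = q⁻¹ * x i * x j := by
  simp [unlinkX]

lemma cs_ne_last {n : ℕ} (a : Fin n) : (Fin.castSucc a = Fin.last n) ↔ False := by
  simp [(Fin.castSucc_lt_last a).ne]

lemma last_ne_cs {n : ℕ} (a : Fin n) : (Fin.last n = Fin.castSucc a) ↔ False := by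
  simp [(Fin.castSucc_lt_last a).ne']

end Helpers

set_option maxHeartbeats 4000000 in
/-- **The outputs of the two hexagon relations differ by a transposition of one pair of arrows**
(Appendix A remark). For pairwise distinct nodes `i, j, k`, let `A` come from applying
`U(i,j)`, `U(j,k)`, `U(m+1,k)` and `B` from applying `U(i,j)`, `U(m+1,k)`, `U(j,k)` (both with
`m+3` nodes; the node created at step `t` has index `m+t-1` in `Fin (m+3)`), and let `τ` be the
transposition of the second and third created nodes. Then the variables agree after relabeling
by `τ`, and the matrix entries agree except on the unordered pairs `{m+1, m+2}` and `{j, m+3}`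
(paper labels), where `A(m+1,m+2) = B(m+1,m+3) + 1` and `A(j,m+3) = B(j,m+2) − 1`. -/


theorem hexagon_outputs_differ {G : Type*} [CommGroup G] (q : G) {m : ℕ}
    (C : Fin m → Fin m → ℤ) (hC : ∀ a b, C a b = C b a) (x : Fin m → G)
    (i j k : Fin m) (hij : i ≠ j) (hjk : j ≠ k) (hik : i ≠ k) :
    let A : Fin (m + 3) → Fin (m + 3) → ℤ :=
      unlinkC (unlinkC (unlinkC C i j) j.castSucc k.castSucc)
        ⟨m, by omega⟩ (k.castSucc.castSucc)
    let Ax : Fin (m + 3) → G :=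
      unlinkX q (unlinkX q (unlinkX q x i j) j.castSucc k.castSucc)
        ⟨m, by omega⟩ (k.castSucc.castSucc)
    let B : Fin (m + 3) → Fin (m + 3) → ℤ :=
      unlinkC (unlinkC (unlinkC C i j) ⟨m, by omega⟩ k.castSucc)
        (j.castSucc.castSucc) (k.castSucc.castSucc)
    let Bx : Fin (m + 3) → G :=
      unlinkX q (unlinkX q (unlinkX q x i j) ⟨m, by omega⟩ k.castSucc)
        (j.castSucc.castSucc) (k.castSucc.castSucc)
    let τ : Equiv.Perm (Fin (m + 3)) :=
      Equiv.swap ⟨m + 1, by omega⟩ ⟨m + 2, by omega⟩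
    let jm : Fin (m + 3) := j.castSucc.castSucc.castSucc
    let p1 : Fin (m + 3) := ⟨m, by omega⟩
    let p2 : Fin (m + 3) := ⟨m + 1, by omega⟩
    let p3 : Fin (m + 3) := ⟨m + 2, by omega⟩
    (∀ a, Ax a = Bx (τ a)) ∧
    (∀ a b, ¬((a = p1 ∧ b = p2) ∨ (a = p2 ∧ b = p1) ∨
              (a = jm ∧ b = p3) ∨ (a = p3 ∧ b = jm)) →
      A a b = B (τ a) (τ b)) ∧
    A p1 p2 = B p1 p3 + 1 ∧ A p2 p1 = B p3 p1 + 1 ∧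
    A jm p3 = B jm p2 - 1 ∧ A p3 jm = B p2 jm - 1 := by
  intro A Ax B Bx tt jm p1 p2 p3
  have e1 : (⟨m, by omega⟩ : Fin (m+1)) = Fin.last m := rfl
  have e2 : (⟨m, by omega⟩ : Fin (m+2)) = (Fin.last m).castSucc := rfl
  have hp1 : p1 = ((Fin.last m : Fin (m+1)).castSucc).castSucc := rfl
  have hp2 : p2 = (Fin.last (m+1)).castSucc := rfl
  have hp3 : p3 = Fin.last (m+2) := rfl
  have ht2 : tt ((Fin.last (m+1)).castSucc) = Fin.last (m+2) := Equiv.swap_apply_left _ _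
  have ht3 : tt (Fin.last (m+2)) = (Fin.last (m+1)).castSucc := Equiv.swap_apply_right _ _
  have htc : ∀ y : Fin (m+1), tt (y.castSucc.castSucc) = y.castSucc.castSucc := by
    intro y
    have := y.is_lt
    apply Equiv.swap_apply_of_ne_of_ne <;> · simp [Fin.ext_iff]; omega
  have cases3 : ∀ a : Fin (m+3), (∃ a3 : Fin m, a = a3.castSucc.castSucc.castSucc) ∨
      a = p1 ∨ a = p2 ∨ a = p3 := by
    intro a
    rcases Nat.lt_or_ge a.val m with h|h
    · exact Or.inl ⟨⟨a, h⟩, by simp [Fin.ext_iff]⟩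
    · have h3 := a.is_lt
      rcases (by omega : a.val = m ∨ a.val = m+1 ∨ a.val = m+2) with h'|h'|h'
      · exact Or.inr (Or.inl (Fin.ext h'))
      · exact Or.inr (Or.inr (Or.inl (Fin.ext h')))
      · exact Or.inr (Or.inr (Or.inr (Fin.ext h')))
  have hij' := hij.symm; have hjk' := hjk.symm; have hik' := hik.symm
  refine ⟨?_, ?_, ?_, ?_, ?_, ?_⟩
  · intro a
    rcases cases3 a with ⟨a3, rfl⟩|rfl|rfl|rfl
    · rw [show tt (a3.castSucc.castSucc.castSucc) = a3.castSucc.castSucc.castSucc from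
        htc a3.castSucc]
      simp only [Ax, Bx, e1, e2, unlinkX_c]
    · rw [show tt p1 = p1 from htc (Fin.last m)]
      simp only [Ax, Bx, hp1, e1, e2, unlinkX_c, unlinkX_l]
    · rw [hp2, ht2, ← hp3]
      simp only [Ax, Bx, hp2, hp3, e1, e2, unlinkX_c, unlinkX_l]
    · rw [hp3, ht3, ← hp2]
      simp only [Ax, Bx, hp2, hp3, e1, e2, unlinkX_c, unlinkX_l]
  · intro a b hnot
    rcases cases3 a with ⟨a3, rfl⟩|rfl|rfl|rfl <;>
      rcases cases3 b with ⟨b3, rfl⟩|rfl|rfl|rfl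
    · simp only [hp1, hp2, hp3, htc]
      simp only [A, B, e1, e2, unlinkC_cc, unlinkC_cl, unlinkC_lc, unlinkC_ll,
        Fin.castSucc_inj, cs_ne_last, last_ne_cs]
      split_ifs <;> simp_all [hC] <;> ring
    · simp only [hp1, hp2, hp3, htc]
      simp only [A, B, e1, e2, unlinkC_cc, unlinkC_cl, unlinkC_lc, unlinkC_ll,
        Fin.castSucc_inj, cs_ne_last, last_ne_cs]
      split_ifs <;> simp_all [hC] <;> ring
    · simp only [hp2, ht2, ← hp3] 
      simp only [hp3, htc]
      simp only [A, B, e1, e2, unlinkC_cc, unlinkC_cl, unlinkC_lc, unlinkC_ll,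
        Fin.castSucc_inj, cs_ne_last, last_ne_cs]
      split_ifs <;> simp_all [hC] <;> ring
    · have haj : a3 ≠ j := fun h => hnot (Or.inr (Or.inr (Or.inl ⟨by rw [h], rfl⟩)))
      simp only [hp3, ht3, ← hp2]
      simp only [hp2, htc]
      simp only [A, B, e1, e2, unlinkC_cc, unlinkC_cl, unlinkC_lc, unlinkC_ll,
        Fin.castSucc_inj, cs_ne_last, last_ne_cs]
      split_ifs <;> simp_all [hC] <;> ring
    · simp only [hp1, hp2, hp3, htc]
      simp only [A, B, e1, e2, unlinkC_cc, unlinkC_cl, unlinkC_lc, unlinkC_ll,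
        Fin.castSucc_inj, cs_ne_last, last_ne_cs]
      split_ifs <;> simp_all [hC] <;> ring
    · simp only [hp1, hp2, hp3, htc]
      simp only [A, B, e1, e2, unlinkC_cc, unlinkC_cl, unlinkC_lc, unlinkC_ll,
        Fin.castSucc_inj, cs_ne_last, last_ne_cs]
      split_ifs <;> simp_all [hC] <;> ring
    · exact absurd (Or.inl ⟨rfl, rfl⟩) hnot
    · simp only [hp3, ht3, ← hp2]
      simp only [hp1, hp2, htc]
      simp only [A, B, e1, e2, unlinkC_cc, unlinkC_cl, unlinkC_lc, unlinkC_ll,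
        Fin.castSucc_inj, cs_ne_last, last_ne_cs]
      split_ifs <;> simp_all [hC] <;> ring
    · simp only [hp2, ht2, ← hp3]
      simp only [hp3, htc]
      simp only [A, B, e1, e2, unlinkC_cc, unlinkC_cl, unlinkC_lc, unlinkC_ll,
        Fin.castSucc_inj, cs_ne_last, last_ne_cs]
      split_ifs <;> simp_all [hC] <;> ring
    · exact absurd (Or.inr (Or.inl ⟨rfl, rfl⟩)) hnot
    · simp only [hp2, ht2, ← hp3]
      simp only [hp3, htc]
      simp only [A, B, e1, e2, unlinkC_cc, unlinkC_cl, unlinkC_lc, unlinkC_ll,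
        Fin.castSucc_inj, cs_ne_last, last_ne_cs]
      split_ifs <;> simp_all [hC] <;> ring
    · rw [hp2, hp3, ht2, ht3]
      simp only [A, B, e1, e2, unlinkC_cc, unlinkC_cl, unlinkC_lc, unlinkC_ll,
        Fin.castSucc_inj, cs_ne_last, last_ne_cs]
      split_ifs <;> simp_all [hC] <;> ring
    · have hbj : b3 ≠ j := fun h => hnot (Or.inr (Or.inr (Or.inr ⟨rfl, by rw [h]⟩)))
      simp only [hp3, ht3, ← hp2]
      simp only [hp2, htc]
      simp only [A, B, e1, e2, unlinkC_cc, unlinkC_cl, unlinkC_lc, unlinkC_ll,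
        Fin.castSucc_inj, cs_ne_last, last_ne_cs]
      split_ifs <;> simp_all [hC] <;> ring
    · simp only [hp3, ht3, ← hp2]
      simp only [hp1, hp2, htc]
      simp only [A, B, e1, e2, unlinkC_cc, unlinkC_cl, unlinkC_lc, unlinkC_ll,
        Fin.castSucc_inj, cs_ne_last, last_ne_cs]
      split_ifs <;> simp_all [hC] <;> ring
    · rw [hp2, hp3, ht2, ht3]
      simp only [A, B, e1, e2, unlinkC_cc, unlinkC_cl, unlinkC_lc, unlinkC_ll,
        Fin.castSucc_inj, cs_ne_last, last_ne_cs]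
      split_ifs <;> simp_all [hC] <;> ring
    · simp only [hp3, ht3, ← hp2]
      simp only [hp2, htc]
      simp only [A, B, e1, e2, unlinkC_cc, unlinkC_cl, unlinkC_lc, unlinkC_ll,
        Fin.castSucc_inj, cs_ne_last, last_ne_cs]
      split_ifs <;> simp_all [hC] <;> ring
  · simp only [jm, hp1, hp2, hp3]
    simp only [A, B, e1, e2, unlinkC_cc, unlinkC_cl, unlinkC_lc, unlinkC_ll,
      Fin.castSucc_inj, cs_ne_last, last_ne_cs]
    split_ifs <;> simp_all [hC] <;> ring
  · simp only [jm, hp1, hp2, hp3]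
    simp only [A, B, e1, e2, unlinkC_cc, unlinkC_cl, unlinkC_lc, unlinkC_ll,
      Fin.castSucc_inj, cs_ne_last, last_ne_cs]
    split_ifs <;> simp_all [hC] <;> ring
  · simp only [jm, hp1, hp2, hp3]
    simp only [A, B, e1, e2, unlinkC_cc, unlinkC_cl, unlinkC_lc, unlinkC_ll,
      Fin.castSucc_inj, cs_ne_last, last_ne_cs]
    split_ifs <;> simp_all [hC] <;> ring
  · simp only [jm, hp1, hp2, hp3]
    simp only [A, B, e1, e2, unlinkC_cc, unlinkC_cl, unlinkC_lc, unlinkC_ll,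
      Fin.castSucc_inj, cs_ne_last, last_ne_cs]
    split_ifs <;> simp_all [hC] <;> ring



end QuiverUnlink
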